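/- Let (V, [,]) be a Leibniz algebra over k ([v,[w,u]] = [[v,w],u] − [[v,u],w]). The Loday differential d(v₁⋯vₙ) = Σ_{1 ≤ i < j ≤ n} (−1)^{j−1} v₁⋯v_{i−1}[vᵢ,vⱼ]v_{i+1}⋯v̂ⱼ⋯vₙ (where v̂ⱼ means vⱼ is omitted) satisfies d ∘ d = 0 on the tensor powers V^⊗n. -/

import Mathlib

/-!
For `w : V` let `θ_w` be the endomorphism of `V^{⊗m}` extending `[-, w]` as a derivation,
`θ_w(x₁⋯xₘ) = Σᵢ x₁⋯[xᵢ, w]⋯xₘ`. Splitting off a last factor, the Loday differential satisfies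
`d(x ⊗ w) = d(x) ⊗ w + (−1)^m θ_w(x)` for `x` of degree `m`, hence
`d(d(x ⊗ w)) = d(d(x)) ⊗ w ± (θ_w d − d θ_w)(x)`.
The Leibniz identity says precisely that `[-, w]` is a derivation of the bracket, and the
extension of any derivation commutes with `d`. Since the tensors `x ⊗ w` span `V^{⊗(m+1)}`,
`d ∘ d = 0` follows by induction on the degree.
-/

open TensorProduct

universe u
variable {R V : Type u} [CommRing R] [AddCommGroup V] [Module R V]

variable (R V) in
/-- The iterated tensor power `V^{⊗n}` (left-nested: `TP 0 = R`, `TP (n+1) = V ⊗ TP n`),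
bundled as an object of `ModuleCat R` so that the recursion carries its instances. -/
noncomputable def TPb : ℕ → ModuleCat.{u} R
  | 0 => ModuleCat.of R R
  | n + 1 => ModuleCat.of R (V ⊗[R] (TPb n))

variable (R V) in
/-- The iterated tensor power `V^{⊗n}` as a type. -/
noncomputable abbrev TP (n : ℕ) : Type u := (TPb R V n : Type u)

/-- `ε₁ = ε ⊗ id^{⊗n}` : applying `ε` to the first tensor factor of `V^{⊗(n+1)}`. -/
noncomputable def eps1 (ε : V →ₗ[R] R) (n : ℕ) : TP R V (n+1) →ₗ[R] TP R V n :=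
  (TensorProduct.lid R (TP R V n)).toLinearMap ∘ₗ LinearMap.rTensor (TP R V n) ε

/-- The multiplication `μ` applied to the factors `i, i+1` of `V^{⊗(n+1)}` (1-indexed,
`1 ≤ i ≤ n`; junk value `0` out of range). -/
noncomputable def mui (μL : V ⊗[R] V →ₗ[R] V) :
    (n : ℕ) → (i : ℕ) → TP R V (n+1) →ₗ[R] TP R V n
  | 0, _ => 0
  | _+1, 0 => 0
  | n+1, 1 => (LinearMap.rTensor (TP R V n) μL) ∘ₗ
      (TensorProduct.assoc R V V (TP R V n)).symm.toLinearMap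
  | n+1, i+2 => LinearMap.lTensor V (mui μL n (i+1))

/-- Right concatenation with the element `one`: `v₁⋯vₙ ↦ v₁⋯vₙ ⊗ 1`. -/
noncomputable def appendOne (one : V) : (n : ℕ) → TP R V n →ₗ[R] TP R V (n+1)
  | 0 => TensorProduct.mk R V R one
  | n+1 => LinearMap.lTensor V (appendOne one n)

/-- `ζ` applied to the last tensor factor of `V^{⊗(n+1)}`. -/
noncomputable def epsLast (ζ : V →ₗ[R] R) : (n : ℕ) → TP R V (n+1) →ₗ[R] TP R V n
  | 0 => ζ ∘ₗ (TensorProduct.rid R V).toLinearMap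
  | n+1 => LinearMap.lTensor V (epsLast ζ n)

/-- The flip of the first two tensor factors of `V^{⊗(n+2)}`. -/
noncomputable def flip12 (n : ℕ) : TP R V (n+2) →ₗ[R] TP R V (n+2) :=
  (TensorProduct.assoc R V V (TP R V n)).toLinearMap ∘ₗ
    (LinearMap.rTensor (TP R V n) (TensorProduct.comm R V V).toLinearMap) ∘ₗ
    (TensorProduct.assoc R V V (TP R V n)).symm.toLinearMap

/-- `id_V ⊗ f` viewed as a map of iterated tensor powers. -/
noncomputable def lT {m m' : ℕ} (f : TP R V m →ₗ[R] TP R V m') :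
    TP R V (m+1) →ₗ[R] TP R V (m'+1) :=
  LinearMap.lTensor V f

/-- The bracket applied to the factors `1, 2` of `V^{⊗(n+2)}` :
`v₁ ⊗ v₂ ⊗ y ↦ [v₁,v₂] ⊗ y`. -/
noncomputable def brHead (bL : V ⊗[R] V →ₗ[R] V) (n : ℕ) :
    TP R V (n+2) →ₗ[R] TP R V (n+1) :=
  (LinearMap.rTensor (TP R V n) bL) ∘ₗ
    (TensorProduct.assoc R V V (TP R V n)).symm.toLinearMap

/-- The `i = 1` part of the Loday differential on `V^{⊗(n+1)}`:
`K(v₁⋯v_{n+1}) = Σ_{j=2}^{n+1} (−1)^{j−1} [v₁,vⱼ] v₂ ⋯ v̂ⱼ ⋯ v_{n+1}`. -/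
noncomputable def KLei (bL : V ⊗[R] V →ₗ[R] V) : (n : ℕ) → TP R V (n+1) →ₗ[R] TP R V n
  | 0 => 0
  | 1 => - brHead bL 0
  | n+2 => - brHead bL (n+1) - flip12 n ∘ₗ lT (KLei bL (n+1)) ∘ₗ flip12 (n+1)

/-- The Loday differential
`d(v₁⋯vₙ) = Σ_{i<j} (−1)^{j−1} v₁⋯v_{i−1}[vᵢ,vⱼ]v_{i+1}⋯v̂ⱼ⋯vₙ` on `V^{⊗(n+1)}`. -/
noncomputable def dLei (bL : V ⊗[R] V →ₗ[R] V) : (n : ℕ) → TP R V (n+1) →ₗ[R] TP R V n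
  | 0 => 0
  | n+1 => KLei bL (n+1) - lT (dLei bL n)

namespace TP

variable (R V) in
noncomputable def cons (n : ℕ) : V →ₗ[R] TP R V n →ₗ[R] TP R V (n+1) :=
  TensorProduct.mk R V (TP R V n)

theorem ext {n : ℕ} {M : Type*} [AddCommGroup M] [Module R M] {f g : TP R V (n+1) →ₗ[R] M}
    (h : ∀ (v : V) (x : TP R V n), f (cons R V n v x) = g (cons R V n v x)) : f = g :=
  TensorProduct.ext' h

theorem ext₂ {n : ℕ} {M : Type*} [AddCommGroup M] [Module R M] {f g : TP R V (n+2) →ₗ[R] M}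
    (h : ∀ (s u : V) (z : TP R V n),
      f (cons R V _ s (cons R V n u z)) = g (cons R V _ s (cons R V n u z))) :
    f = g :=
  ext fun s => LinearMap.congr_fun (ext (f := f ∘ₗ cons R V _ s) (g := g ∘ₗ cons R V _ s) (h s))

noncomputable def mapFirst (f : V →ₗ[R] V) (n : ℕ) : TP R V (n+1) →ₗ[R] TP R V (n+1) :=
  LinearMap.rTensor (TP R V n) f

noncomputable def derivExt (f : V →ₗ[R] V) : (n : ℕ) → TP R V n →ₗ[R] TP R V n
  | 0 => 0
  | n+1 => mapFirst f n + lT (derivExt f n)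

theorem derivExt_succ (f : V →ₗ[R] V) (n : ℕ) :
    derivExt f (n+1) = mapFirst f n + lT (derivExt f n) := rfl

end TP

open TP

section ConsLemmas

variable {n : ℕ} (s u : V) (z : TP R V n)

@[simp] theorem flip12_cons_cons :
    flip12 n (cons R V _ s (cons R V n u z)) = cons R V _ u (cons R V n s z) := rfl

@[simp] theorem brHead_cons_cons (br : V →ₗ[R] V →ₗ[R] V) :
    brHead (lift br) n (cons R V _ s (cons R V n u z)) = cons R V n (br s u) z := by
  change lift br (s ⊗ₜ[R] u) ⊗ₜ[R] z = br s u ⊗ₜ[R] z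
  rw [lift.tmul]

@[simp] theorem lT_cons {m : ℕ} (g : TP R V n →ₗ[R] TP R V m) :
    lT g (cons R V n s z) = cons R V m s (g z) := rfl

@[simp] theorem TP.mapFirst_cons (f : V →ₗ[R] V) :
    mapFirst f n (cons R V n s z) = cons R V n (f s) z := rfl

@[simp] theorem TP.derivExt_cons (f : V →ₗ[R] V) :
    derivExt f (n+1) (cons R V n s z) = cons R V n (f s) z + cons R V n s (derivExt f n z) :=
  rfl

@[simp] theorem appendOne_cons (w : V) :
    appendOne w (n+1) (cons R V n s z) = cons R V _ s (appendOne w n z) := rfl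

@[simp] theorem appendOne_zero_apply (w : V) (r : TP R V 0) :
    appendOne w 0 r = cons R V 0 w r := rfl

end ConsLemmas

theorem lT_comp {m m' m'' : ℕ} (g : TP R V m' →ₗ[R] TP R V m'') (h : TP R V m →ₗ[R] TP R V m') :
    lT (g ∘ₗ h) = lT g ∘ₗ lT h :=
  LinearMap.lTensor_comp V g h

theorem lT_add {m m' : ℕ} (g h : TP R V m →ₗ[R] TP R V m') : lT (g + h) = lT g + lT h :=
  LinearMap.lTensor_add V g h

theorem lT_smul {m m' : ℕ} (c : R) (g : TP R V m →ₗ[R] TP R V m') : lT (c • g) = c • lT g :=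
  LinearMap.lTensor_smul V c g

theorem lT_appendOne (w : V) (n : ℕ) : lT (R := R) (appendOne w n) = appendOne w (n+1) := rfl

section Derivation

variable (f : V →ₗ[R] V)

theorem TP.derivExt_comp_flip12 (n : ℕ) :
    derivExt f (n+2) ∘ₗ flip12 n = flip12 n ∘ₗ derivExt f (n+2) :=
  ext₂ fun s u z => by
    simp only [LinearMap.comp_apply, flip12_cons_cons, TP.derivExt_cons, map_add]
    abel

theorem TP.derivExt_comp_lT {m m' : ℕ} {g : TP R V m →ₗ[R] TP R V m'}
    (h : derivExt f m' ∘ₗ g = g ∘ₗ derivExt f m) :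
    derivExt f (m'+1) ∘ₗ lT g = lT g ∘ₗ derivExt f (m+1) :=
  ext fun s z => by
    simp only [LinearMap.comp_apply, lT_cons, TP.derivExt_cons, map_add]
    rw [← LinearMap.comp_apply (derivExt f m'), h, LinearMap.comp_apply]

variable {br : V →ₗ[R] V →ₗ[R] V}

theorem TP.derivExt_comp_brHead (hf : ∀ a b, f (br a b) = br (f a) b + br a (f b)) (n : ℕ) :
    derivExt f (n+1) ∘ₗ brHead (lift br) n = brHead (lift br) n ∘ₗ derivExt f (n+2) :=
  ext₂ fun s u z => by
    simp only [LinearMap.comp_apply, brHead_cons_cons, TP.derivExt_cons, map_add, hf,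
      LinearMap.add_apply]
    abel

theorem TP.derivExt_comp_KLei (hf : ∀ a b, f (br a b) = br (f a) b + br a (f b)) :
    ∀ n, derivExt f n ∘ₗ KLei (lift br) n = KLei (lift br) n ∘ₗ derivExt f (n+1)
  | 0 => by simp [KLei]
  | 1 => by simp [KLei, TP.derivExt_comp_brHead f hf]
  | n+2 => by
    simp only [KLei, LinearMap.comp_sub, LinearMap.sub_comp, LinearMap.comp_neg,
      LinearMap.neg_comp, TP.derivExt_comp_brHead f hf, ← LinearMap.comp_assoc,
      TP.derivExt_comp_flip12]
    simp only [LinearMap.comp_assoc, TP.derivExt_comp_flip12,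
      TP.derivExt_comp_lT f (TP.derivExt_comp_KLei hf (n+1))]

theorem TP.derivExt_comp_dLei (hf : ∀ a b, f (br a b) = br (f a) b + br a (f b)) :
    ∀ n, derivExt f n ∘ₗ dLei (lift br) n = dLei (lift br) n ∘ₗ derivExt f (n+1)
  | 0 => by simp [dLei]
  | n+1 => by
    simp only [dLei, LinearMap.comp_sub, LinearMap.sub_comp, TP.derivExt_comp_KLei f hf,
      TP.derivExt_comp_lT f (TP.derivExt_comp_dLei hf n)]

end Derivation

section LastFactor

variable (w : V)

theorem flip12_comp_appendOne (n : ℕ) :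
    flip12 (R := R) (n+1) ∘ₗ appendOne w (n+2) = appendOne w (n+2) ∘ₗ flip12 n :=
  ext₂ fun _ _ _ => rfl

theorem brHead_comp_appendOne (br : V →ₗ[R] V →ₗ[R] V) (n : ℕ) :
    brHead (lift br) (n+1) ∘ₗ appendOne w (n+2) = appendOne w (n+1) ∘ₗ brHead (lift br) n :=
  ext₂ fun _ _ _ => by simp

theorem flip12_comp_lT_mapFirst_comp_flip12 (f : V →ₗ[R] V) (n : ℕ) :
    flip12 n ∘ₗ lT (mapFirst f n) ∘ₗ flip12 n = mapFirst f (n+1) :=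
  ext₂ fun _ _ _ => rfl

theorem KLei_comp_appendOne (br : V →ₗ[R] V →ₗ[R] V) :
    ∀ n, KLei (lift br) (n+1) ∘ₗ appendOne w (n+1)
      = appendOne w n ∘ₗ KLei (lift br) n + (-1 : R) ^ (n+1) • mapFirst (br.flip w) n
  | 0 => ext fun s r => by simp [KLei]
  | 1 => ext₂ fun s u r => by simp [KLei]
  | n+2 => by
    have hK : lT (KLei (lift br) (n+2)) ∘ₗ appendOne w (n+3)
        = appendOne w (n+2) ∘ₗ lT (KLei (lift br) (n+1))
          + (-1 : R) ^ (n+2) • lT (mapFirst (br.flip w) (n+1)) := by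
      rw [← lT_appendOne w (n+2), ← lT_comp, KLei_comp_appendOne br (n+1), lT_add, lT_smul,
        lT_comp, lT_appendOne]
    calc KLei (lift br) (n+3) ∘ₗ appendOne w (n+3)
        = -(brHead (lift br) (n+2) ∘ₗ appendOne w (n+3))
          - flip12 (n+1) ∘ₗ lT (KLei (lift br) (n+2)) ∘ₗ (flip12 (n+2) ∘ₗ appendOne w (n+3)) := by
          rw [KLei]
          simp only [LinearMap.sub_comp, LinearMap.neg_comp, LinearMap.comp_assoc]
      _ = -(appendOne w (n+2) ∘ₗ brHead (lift br) (n+1))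
          - flip12 (n+1) ∘ₗ (lT (KLei (lift br) (n+2)) ∘ₗ appendOne w (n+3)) ∘ₗ flip12 (n+1) := by
          rw [brHead_comp_appendOne, flip12_comp_appendOne, LinearMap.comp_assoc]
      _ = -(appendOne w (n+2) ∘ₗ brHead (lift br) (n+1))
          - (flip12 (n+1) ∘ₗ appendOne w (n+2)) ∘ₗ lT (KLei (lift br) (n+1)) ∘ₗ flip12 (n+1)
          - (-1 : R) ^ (n+2) •
              (flip12 (n+1) ∘ₗ lT (mapFirst (br.flip w) (n+1)) ∘ₗ flip12 (n+1)) := by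
          rw [hK]
          simp only [LinearMap.add_comp, LinearMap.comp_add, LinearMap.smul_comp,
            LinearMap.comp_smul, LinearMap.comp_assoc]
          abel
      _ = _ := by
          rw [flip12_comp_appendOne, flip12_comp_lT_mapFirst_comp_flip12, KLei]
          simp only [LinearMap.comp_sub, LinearMap.comp_neg, LinearMap.comp_assoc, pow_succ]
          module

theorem dLei_comp_appendOne (br : V →ₗ[R] V →ₗ[R] V) :
    ∀ n, dLei (lift br) (n+1) ∘ₗ appendOne w (n+1)
      = appendOne w n ∘ₗ dLei (lift br) n + (-1 : R) ^ (n+1) • derivExt (br.flip w) (n+1)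
  | 0 => ext fun s r => by simp [dLei, KLei, derivExt]
  | n+1 => by
    rw [dLei, LinearMap.sub_comp, KLei_comp_appendOne, ← lT_appendOne w (n+1), ← lT_comp,
      dLei_comp_appendOne br n, lT_add, lT_smul, lT_comp, lT_appendOne, dLei,
      derivExt_succ _ (n+1)]
    simp only [LinearMap.comp_sub, pow_succ]
    module

end LastFactor

theorem TP.ext_appendOne {M : Type*} [AddCommGroup M] [Module R M] :
    ∀ {n : ℕ} {f g : TP R V (n+1) →ₗ[R] M},
      (∀ w, f ∘ₗ appendOne w n = g ∘ₗ appendOne w n) → f = g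
  | 0, _, _, h => ext fun s r => LinearMap.congr_fun (h s) r
  | n+1, f, g, h => ext fun s => LinearMap.congr_fun <|
      TP.ext_appendOne (f := f ∘ₗ cons R V _ s) (g := g ∘ₗ cons R V _ s) fun w =>
        congrArg (· ∘ₗ cons R V n s) (h w)

theorem flip_isDerivation_of_leibniz (br : V →ₗ[R] V →ₗ[R] V)
    (hLeibniz : ∀ v w u : V, br v (br w u) = br (br v w) u - br (br v u) w) (w a b : V) :
    br.flip w (br a b) = br (br.flip w a) b + br a (br.flip w b) := by
  simp only [LinearMap.flip_apply, hLeibniz]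
  abel

/-- for a Leibniz algebra `(V, [,])`, the Loday differential
`d(v₁⋯vₙ) = Σ_{i<j} (−1)^{j−1} v₁⋯[vᵢ,vⱼ]⋯v̂ⱼ⋯vₙ` satisfies `d ∘ d = 0`. -/
theorem loday_differential_squares_to_zero
    (br : V →ₗ[R] V →ₗ[R] V)
    (hLeibniz : ∀ v w u : V, br v (br w u) = br (br v w) u - br (br v u) w) :
    ∀ n : ℕ, dLei (TensorProduct.lift br) n ∘ₗ dLei (TensorProduct.lift br) (n+1) = 0 := by
  intro n
  induction n with
  | zero => exact LinearMap.zero_comp _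
  | succ n ih =>
    refine TP.ext_appendOne fun w => ?_
    rw [LinearMap.comp_assoc, dLei_comp_appendOne, LinearMap.comp_add, ← LinearMap.comp_assoc,
      dLei_comp_appendOne, LinearMap.add_comp, LinearMap.comp_assoc, ih, LinearMap.comp_smul,
      LinearMap.smul_comp,
      ← TP.derivExt_comp_dLei _ (flip_isDerivation_of_leibniz br hLeibniz w)]
    simp only [LinearMap.comp_zero, LinearMap.zero_comp, pow_succ]
    module
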